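/- arXiv:2112.12184 — 4 statements merged into one kernel-verified Lean document; each statement's English description precedes it below -/
import Mathlib

section
/- For set partitions 𝒜, ℬ of [d] and permutations α, β of [d] with each cycle of α contained in a block of 𝒜 and each cycle of β contained in a block of ℬ, the colength of the product satisfies |(𝒜 ∨ ℬ, α∘β)| ≤ |(𝒜,α)| + |(ℬ,β)|, where 𝒜 ∨ ℬ is the join (smallest common coarsening) of the two partitions. -/
open Equiv

/-- The setoid on `β` whose classes are the supports of the cycles of `α`
(fixed points giving singleton classes); this is the partition `𝟎_α`. -/
def cycleSetoid {β : Type*} (α : Equiv.Perm β) : Setoid β :=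
  ⟨α.SameCycle, ⟨fun x => Equiv.Perm.SameCycle.refl α x, fun h => h.symm, fun h h' => h.trans h'⟩⟩

/-- Number of blocks of a set partition (encoded as a setoid). -/
noncomputable def numBlocks {β : Type*} (s : Setoid β) : ℕ :=
  Nat.card (Quotient s)

/-- Number of cycles of a permutation, counting fixed points as cycles. -/
noncomputable def numCycles {β : Type*} (α : Equiv.Perm β) : ℕ :=
  numBlocks (cycleSetoid α)

/-- The colength `|α| = d - #cycles(α)` of a permutation of `Fin d`. -/
noncomputable def permColength {d : ℕ} (α : Equiv.Perm (Fin d)) : ℕ :=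
  d - numCycles α

/-- A partitioned permutation of `[d]`: a pair `(𝒜, α)` of a set partition `𝒜` of `[d]`
and a permutation `α` of `[d]` such that `𝟎_α ≤ 𝒜`, i.e. every cycle support of `α`
is contained in a block of `𝒜`. -/
structure PartPerm (d : ℕ) where
  part : Setoid (Fin d)
  perm : Equiv.Perm (Fin d)
  refines : ∀ x y : Fin d, perm.SameCycle x y → part.r x y

theorem PartPerm.ext' {d : ℕ} {p q : PartPerm d}
    (h1 : p.part = q.part) (h2 : p.perm = q.perm) : p = q := by
  cases p; cases q; simp_all

/-- Colength `|(𝒜,α)| = 2|𝒜| - |α| = 2(d - #𝒜) - (d - #cycles α)`, as an integer. -/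
noncomputable def pairColength {d : ℕ} (s : Setoid (Fin d)) (σ : Equiv.Perm (Fin d)) : ℤ :=
  2 * ((d : ℤ) - numBlocks s) - ((d : ℤ) - numCycles σ)

noncomputable def PartPerm.colength {d : ℕ} (p : PartPerm d) : ℤ :=
  pairColength p.part p.perm


/-!
Multiplying `ρ` by a transposition `(b c)` merges the cycles of `b` and `c` if they differ and
splits their common cycle otherwise, while joining a partition `𝒟 ≥ 𝟎_ρ` with `{b, c}` lowers the
number of blocks by at most one, and only when `b, c` lie in different blocks of `𝒟`, hence in
different cycles of `ρ`. So `|(𝒟 ∨ {b, c}, ρ (b c))| ≤ |(𝒟, ρ)| + 1`. Cutting the points of `β`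
out of its cycles one at a time writes `β` as a product of `d - #cycles(β)` transpositions,
which proves the case `ℬ = 𝟎_β`. The general case `𝟎_β ≤ ℬ` follows from semimodularity of the
partition lattice: `#ℬ + #(𝟎_β ∨ 𝒜) ≤ #𝟎_β + #(ℬ ∨ 𝒜)`.
-/

lemma Setoid.map_of_le_surjective {γ : Type*} {s t : Setoid γ} (h : s ≤ t) :
    Function.Surjective (Setoid.map_of_le h) :=
  Quot.map_surjective (fun _ _ hab => h hab) Function.surjective_id

section Blocks

variable {γ : Type*} [Finite γ]

lemma numBlocks_antitone : Antitone (@numBlocks γ) := fun _ _ h =>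
  Nat.card_le_card_of_surjective _ (Setoid.map_of_le_surjective h)

lemma numBlocks_le_card (s : Setoid γ) : numBlocks s ≤ Nat.card γ :=
  Nat.card_le_card_of_surjective (Quotient.mk s) Quotient.mk_surjective

lemma numBlocks_lt_of_le {s t : Setoid γ} (h : s ≤ t) {a b : γ} (ht : t a b) (hs : ¬ s a b) :
    numBlocks t < numBlocks s := by
  refine (numBlocks_antitone h).lt_of_ne fun hEq => hs ?_
  have hbij := (Setoid.map_of_le_surjective h).bijective_of_nat_card_le hEq.ge
  exact Quotient.exact (hbij.1 (Quotient.sound ht : Setoid.map_of_le h ⟦a⟧ = _))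

end Blocks

open Perm

section Cycles

variable {γ : Type*}

lemma cycleSetoid_le_iff {f : Perm γ} {r : Setoid γ} :
    cycleSetoid f ≤ r ↔ ∀ x, r x (f x) := by
  refine ⟨fun h x => h (⟨1, by simp⟩ : f.SameCycle x (f x)), ?_⟩
  rintro h x _ ⟨i, rfl⟩
  induction i using Int.induction_on with
  | zero => exact r.refl' x
  | succ i ih => rw [add_comm, zpow_one_add, Perm.mul_apply]; exact r.trans' ih (h _)
  | pred i ih =>
    rw [sub_eq_neg_add, zpow_add, zpow_neg_one, Perm.mul_apply]
    refine r.trans' ih (r.symm' ?_)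
    simpa using h (f⁻¹ ((f ^ (-(i : ℤ))) x))

lemma cycleSetoid_mul_le (σ ρ : Perm γ) :
    cycleSetoid (σ * ρ) ≤ cycleSetoid σ ⊔ cycleSetoid ρ :=
  have hσ : cycleSetoid σ ≤ cycleSetoid σ ⊔ cycleSetoid ρ := le_sup_left
  have hρ : cycleSetoid ρ ≤ cycleSetoid σ ⊔ cycleSetoid ρ := le_sup_right
  cycleSetoid_le_iff.2 fun x => Setoid.trans' _ (cycleSetoid_le_iff.1 hρ x)
    (cycleSetoid_le_iff.1 hσ (ρ x))

variable [DecidableEq γ]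

lemma cycleSetoid_swap_le_iff {a b : γ} {s : Setoid γ} :
    cycleSetoid (swap a b) ≤ s ↔ s a b := by
  refine cycleSetoid_le_iff.trans ⟨fun h => by simpa using h a, fun h x => ?_⟩
  rw [swap_apply_def]
  split_ifs with hxa hxb
  · exact hxa ▸ h
  · exact hxb ▸ s.symm' h
  · exact s.refl' x

lemma cycleSetoid_mul_swap_sup (ρ : Perm γ) (a b : γ) :
    cycleSetoid (ρ * swap a b) ⊔ cycleSetoid (swap a b) =
      cycleSetoid ρ ⊔ cycleSetoid (swap a b) := by
  have key : ∀ τ : Perm γ, cycleSetoid (τ * swap a b) ⊔ cycleSetoid (swap a b) ≤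
      cycleSetoid τ ⊔ cycleSetoid (swap a b) := fun τ =>
    sup_le (cycleSetoid_mul_le _ _) le_sup_right
  refine (key ρ).antisymm ?_
  simpa only [mul_swap_mul_self] using key (ρ * swap a b)

variable [Finite γ]

lemma sameCycle_mul_swap_of_not_sameCycle {ρ : Perm γ} {a b : γ} (h : ¬ ρ.SameCycle a b) :
    (ρ * swap a b).SameCycle a b := by
  by_contra hτ
  -- `ρ * swap a b` sends `a` to `ρ b` and agrees with `ρ` off `{a, b}`, so its cycle through `a`
  -- would contain the whole `ρ`-cycle of `b`
  have key : ∀ k : ℕ, (ρ * swap a b).SameCycle a ((ρ ^ (k + 1)) b) := by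
    intro k
    induction k with
    | zero => exact ⟨1, by simp⟩
    | succ k ih =>
      have hb : (ρ ^ (k + 1)) b ≠ b := fun hb => hτ (by rwa [hb] at ih)
      have ha : (ρ ^ (k + 1)) b ≠ a := fun ha =>
        h (ha ▸ sameCycle_pow_right.2 (SameCycle.refl ρ b)).symm
      have := sameCycle_apply_right.2 ih
      rwa [Perm.mul_apply, swap_apply_of_ne_of_ne ha hb, ← Perm.mul_apply, ← pow_succ'] at this
  have := key (orderOf ρ - 1)
  rw [Nat.sub_add_cancel (orderOf_pos ρ), pow_orderOf_eq_one] at this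
  exact hτ this

lemma cycleSetoid_mul_swap_of_not_sameCycle {ρ : Perm γ} {a b : γ} (h : ¬ ρ.SameCycle a b) :
    cycleSetoid (ρ * swap a b) = cycleSetoid ρ ⊔ cycleSetoid (swap a b) := by
  rw [← cycleSetoid_mul_swap_sup,
    sup_eq_left.2 (cycleSetoid_swap_le_iff.2 (sameCycle_mul_swap_of_not_sameCycle h))]

end Cycles

section Counting

variable {γ : Type*} [Finite γ]

lemma numBlocks_le_numBlocks_sup_swap_add_one [DecidableEq γ] (s : Setoid γ) (a b : γ) :
    numBlocks s ≤ numBlocks (s ⊔ cycleSetoid (swap a b)) + 1 := by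
  classical
  -- `s ⊔ (a b)` is finer than the kernel of "merge the class of `b` into that of `a`"
  let g : Quotient s → Quotient s := Function.update id ⟦b⟧ ⟦a⟧
  have hker : s ⊔ cycleSetoid (swap a b) ≤ Setoid.ker (g ∘ Quotient.mk s) := by
    refine sup_le (fun x y hxy => congrArg g (Quotient.sound hxy)) (cycleSetoid_swap_le_iff.2 ?_)
    show g ⟦a⟧ = g ⟦b⟧
    by_cases hab : (⟦a⟧ : Quotient s) = ⟦b⟧
    · rw [hab]
    · simp [g, Function.update_of_ne hab]
  have hcover : Set.univ ⊆ insert ⟦b⟧ (Set.range g) := fun q _ => by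
    by_cases hq : q = ⟦b⟧
    · exact Or.inl hq
    · exact Or.inr ⟨q, Function.update_of_ne hq _ _⟩
  calc numBlocks s = (Set.univ : Set (Quotient s)).ncard := (Set.ncard_univ _).symm
    _ ≤ (insert ⟦b⟧ (Set.range g)).ncard := Set.ncard_le_ncard hcover
    _ ≤ (Set.range g).ncard + 1 := Set.ncard_insert_le _ _
    _ = numBlocks (Setoid.ker (g ∘ Quotient.mk s)) + 1 := by
      rw [numBlocks, Nat.card_congr (Setoid.quotientKerEquivRange _),
        Quotient.mk_surjective.range_comp, Nat.card_coe_set_eq]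
    _ ≤ numBlocks (s ⊔ cycleSetoid (swap a b)) + 1 := by
      gcongr; exact numBlocks_antitone hker

lemma numBlocks_add_numBlocks_sup_le {P A : Setoid γ} (hPA : P ≤ A) (C : Setoid γ) :
    numBlocks A + numBlocks (P ⊔ C) ≤ numBlocks P + numBlocks (A ⊔ C) := by
  classical
  induction hn : numBlocks P using Nat.strong_induction_on generalizing P with
  | _ n ih =>
  obtain rfl | hne := eq_or_ne P A
  · omega
  obtain ⟨a, b, hab, hnab⟩ : ∃ a b, A a b ∧ ¬ P a b := by
    by_contra! h
    exact hne (hPA.antisymm fun x y => h x y)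
  set P' := P ⊔ cycleSetoid (swap a b)
  have hab' : P' a b := (le_sup_right : cycleSetoid (swap a b) ≤ P')
    (cycleSetoid_swap_le_iff.1 le_rfl)
  have hlt : numBlocks P' < numBlocks P := numBlocks_lt_of_le le_sup_left hab' hnab
  have hIH : numBlocks A + numBlocks (P' ⊔ C) ≤ numBlocks P' + numBlocks (A ⊔ C) :=
    ih _ (hn ▸ hlt) (sup_le hPA (cycleSetoid_swap_le_iff.2 hab)) rfl
  have hC : numBlocks (P ⊔ C) ≤ numBlocks (P' ⊔ C) + 1 := by
    rw [sup_right_comm]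
    exact numBlocks_le_numBlocks_sup_swap_add_one _ a b
  omega

lemma numCycles_le_card (σ : Perm γ) : numCycles σ ≤ Nat.card γ :=
  numBlocks_le_card _

variable [DecidableEq γ]

lemma numCycles_mul_swap_le (ρ : Perm γ) (a b : γ) :
    numCycles (ρ * swap a b) ≤ numCycles ρ + 1 :=
  calc numCycles (ρ * swap a b)
      ≤ numBlocks (cycleSetoid (ρ * swap a b) ⊔ cycleSetoid (swap a b)) + 1 :=
        numBlocks_le_numBlocks_sup_swap_add_one _ a b
    _ = numBlocks (cycleSetoid ρ ⊔ cycleSetoid (swap a b)) + 1 := by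
        rw [cycleSetoid_mul_swap_sup]
    _ ≤ numCycles ρ + 1 := by
        gcongr; exact numBlocks_antitone le_sup_left

lemma numCycles_mul_swap_lt {ρ : Perm γ} {a b : γ} (h : ¬ ρ.SameCycle a b) :
    numCycles (ρ * swap a b) < numCycles ρ := by
  have hab : (cycleSetoid ρ ⊔ cycleSetoid (swap a b)) a b :=
    (le_sup_right : cycleSetoid (swap a b) ≤ _) (cycleSetoid_swap_le_iff.1 le_rfl)
  rw [numCycles, cycleSetoid_mul_swap_of_not_sameCycle h]
  exact numBlocks_lt_of_le le_sup_left hab h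

end Counting

section Colength

variable {d : ℕ}

lemma pairColength_sup_mul_swap_le {D : Setoid (Fin d)} {ρ : Perm (Fin d)}
    (hρ : cycleSetoid ρ ≤ D) (b c : Fin d) :
    pairColength (D ⊔ cycleSetoid (swap b c)) (ρ * swap b c) ≤ pairColength D ρ + 1 := by
  unfold pairColength
  by_cases hD : D b c
  · rw [sup_eq_left.2 (cycleSetoid_swap_le_iff.2 hD)]
    have := numCycles_mul_swap_le ρ b c
    omega
  · have hcyc := numCycles_mul_swap_lt fun h => hD (hρ h)
    have hblk := numBlocks_le_numBlocks_sup_swap_add_one D b c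
    omega

lemma pairColength_sup_cycleSetoid_mul_le (β : Perm (Fin d)) {C : Setoid (Fin d)}
    {σ : Perm (Fin d)} (hσ : cycleSetoid σ ≤ C) :
    pairColength (C ⊔ cycleSetoid β) (σ * β) ≤ pairColength C σ + ((d : ℤ) - numCycles β) := by
  induction hn : d - numCycles β using Nat.strong_induction_on generalizing β with
  | _ n ih =>
  have hβd : numCycles β ≤ d := by simpa using numCycles_le_card β
  by_cases hβ : ∀ x, β x = x
  · obtain rfl : β = 1 := Perm.ext hβ
    rw [sup_eq_left.2 (cycleSetoid_le_iff.2 fun x => C.refl' x), mul_one]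
    omega
  obtain ⟨b, hb⟩ := not_forall.1 hβ
  -- `β' := β * swap b (β b)` is `β` with `β b` cut out of its cycle as a fixed point
  set β' := β * swap b (β b) with hβ'
  have hβ_eq : β' * swap b (β b) = β := mul_swap_mul_self _ _ _
  have hsplit : ¬ β'.SameCycle b (β b) := fun h =>
    hb (h.eq_of_right (show β' (β b) = β b by simp [hβ'])).symm
  have hcyc : cycleSetoid β' ⊔ cycleSetoid (swap b (β b)) = cycleSetoid β := by
    rw [← cycleSetoid_mul_swap_of_not_sameCycle hsplit, hβ_eq]
  have hlt : numCycles β < numCycles β' := by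
    simpa only [hβ_eq] using numCycles_mul_swap_lt hsplit
  have hβ'd : numCycles β' ≤ d := by simpa using numCycles_le_card β'
  have hIH := ih _ (by omega) β' rfl
  have hstep := pairColength_sup_mul_swap_le
    ((cycleSetoid_mul_le σ β').trans (sup_le_sup_right hσ _)) b (β b)
  rw [sup_assoc, hcyc, mul_assoc, hβ_eq] at hstep
  omega

end Colength

/-- Subadditivity of colength: `|(𝒜 ∨ ℬ, α∘β)| ≤ |(𝒜,α)| + |(ℬ,β)|`. -/
theorem colength_join_le (d : ℕ) (A B : Setoid (Fin d)) (α β : Equiv.Perm (Fin d))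
    (hA : ∀ x y, α.SameCycle x y → A.r x y)
    (hB : ∀ x y, β.SameCycle x y → B.r x y) :
    pairColength (A ⊔ B) (α * β) ≤ pairColength A α + pairColength B β := by
  have hαA : cycleSetoid α ≤ A := fun x y h => hA x y h
  have hβB : cycleSetoid β ≤ B := fun x y h => hB x y h
  have hstar := pairColength_sup_cycleSetoid_mul_le β hαA
  have hmod := numBlocks_add_numBlocks_sup_le hβB A
  rw [sup_comm (cycleSetoid β), sup_comm B] at hmod
  unfold pairColength numCycles at *
  omega
end

section
/- If f₁, f₂ : PS(d) → R are multiplicative functions on partitioned permutations of [d], then their extended convolutions commute: f₁ ⊛ f₂ = f₂ ⊛ f₁, where (f₁ ⊛ f₂)(𝒞,γ) = Σ_{(𝒜,α)⊙(ℬ,β)=(𝒞,γ)} f₁(𝒜,α) f₂(ℬ,β). -/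
open Equiv

/-- Cycle supports of `α∘β` lie in blocks of `𝒜 ∨ ℬ`: closure of partitioned
permutations under the extended multiplication. -/
theorem refines_mul {d : ℕ} {A B : Setoid (Fin d)} {α β : Equiv.Perm (Fin d)}
    (hA : ∀ x y, α.SameCycle x y → A.r x y) (hB : ∀ x y, β.SameCycle x y → B.r x y) :
    ∀ x y, (α * β).SameCycle x y → (A ⊔ B).r x y := by
  classical
  have hle1 : ∀ x y : Fin d, A.r x y → (A ⊔ B).r x y := fun x y h =>
    Setoid.le_def.mp (le_sup_left : A ≤ A ⊔ B) h
  have hle2 : ∀ x y : Fin d, B.r x y → (A ⊔ B).r x y := fun x y h =>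
    Setoid.le_def.mp (le_sup_right : B ≤ A ⊔ B) h
  have step : ∀ z : Fin d, (A ⊔ B).r z ((α * β) z) := by
    intro z
    refine (A ⊔ B).trans (hle2 z (β z) (hB z (β z) ⟨1, by simp⟩)) ?_
    exact hle1 (β z) (α (β z)) (hA (β z) (α (β z)) ⟨1, by simp⟩)
  have key : ∀ n : ℕ, ∀ z : Fin d, (A ⊔ B).r z (((α * β) ^ n) z) := by
    intro n
    induction n with
    | zero => intro z; simpa using (A ⊔ B).refl z
    | succ n ih =>
      intro z
      have h1 := ih z
      have h2 := step (((α * β) ^ n) z)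
      have h3 : ((α * β) ^ (n + 1)) z = (α * β) (((α * β) ^ n) z) := by
        rw [pow_succ']
        simp [Equiv.Perm.mul_apply]
      rw [h3]
      exact (A ⊔ B).trans h1 h2
  intro x y h
  obtain ⟨i, hi0, _, hi⟩ := Equiv.Perm.SameCycle.exists_pow_eq (α * β) h
  rw [← hi]
  exact key i x

/-- The unit partitioned permutation `(𝟎_id, id)`. -/
def PartPerm.one (d : ℕ) : PartPerm d :=
  ⟨⊥, 1, fun x y h => by
    have hxy : x = y := Equiv.Perm.sameCycle_one.mp h
    subst hxy
    exact (⊥ : Setoid (Fin d)).refl x⟩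

/-- The extended multiplication `(𝒜,α) ⊙ (ℬ,β) = (𝒜 ∨ ℬ, α∘β)` of partitioned
permutations. -/
def PartPerm.mul {d : ℕ} (p q : PartPerm d) : PartPerm d :=
  ⟨p.part ⊔ q.part, p.perm * q.perm, refines_mul p.refines q.refines⟩

instance {d : ℕ} : Finite (Setoid (Fin d)) :=
  Finite.of_injective (fun s => s.r) (fun s t h => by cases s; cases t; simp_all)

instance {d : ℕ} : Finite (PartPerm d) :=
  Finite.of_injective (fun p => (p.part, p.perm))
    (fun p q h => PartPerm.ext' (congrArg Prod.fst h) (congrArg Prod.snd h))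

/-- The cycle type of a permutation of a finite type, including fixed points
as cycles of length `1`; as a multiset, this is a partition of the cardinality. -/
noncomputable def fullCycleType {β : Type*} [Finite β] (α : Equiv.Perm β) : Multiset ℕ :=
  letI := Fintype.ofFinite β
  letI := Classical.decEq β
  Multiset.replicate (Nat.card β - α.cycleType.sum) 1 + α.cycleType

/-- Each block of a partitioned permutation is invariant under the permutation, which
therefore restricts to a permutation `α|_A` of the block. -/
def blockPerm {d : ℕ} (p : PartPerm d) (c : Quotient p.part) :
    Equiv.Perm {x : Fin d // Quotient.mk p.part x = c} :=
  p.perm.subtypePerm (by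
    intro x
    have h : p.part.r x (p.perm x) := p.refines x (p.perm x) ⟨1, by simp⟩
    have h' : Quotient.mk p.part x = Quotient.mk p.part (p.perm x) := Quotient.sound h
    constructor <;> intro hx <;> simp_all)

/-- A function on partitioned permutations of `[d]` is multiplicative if it is of the
form `f(𝒜,α) = Π_{A ∈ 𝒜} g(λ(α|_A))` where `g` is a function of the cycle type only
(this encodes that `f(𝟏_d,σ)` depends only on the conjugacy class of `σ`, together
with the factorisation over blocks). -/
def IsMultiplicativeFn {R : Type*} [CommRing R] {d : ℕ} (f : PartPerm d → R) : Prop :=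
  ∃ g : Multiset ℕ → R, ∀ p : PartPerm d,
    f p = ∏ᶠ c : Quotient p.part, g (fullCycleType (blockPerm p c))

/-- The extended convolution `(f₁ ⊛ f₂)(𝒞,γ) = Σ_{(𝒜,α)⊙(ℬ,β)=(𝒞,γ)} f₁(𝒜,α) f₂(ℬ,β)`. -/
noncomputable def extConv {R : Type*} [CommRing R] {d : ℕ} (f g : PartPerm d → R) :
    PartPerm d → R :=
  open scoped Classical in
  fun c => ∑ᶠ q : PartPerm d × PartPerm d,
    if q.1.mul q.2 = c then f q.1 * g q.2 else 0

/-!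
Right multiplication by `(ℬ,β)` can be traded for left multiplication after conjugating:
`(𝒜,α) ⊙ (ℬ,β) = (ℬ,β) ⊙ (β⁻¹𝒜β, β⁻¹αβ)`, because `β` preserves the blocks of `ℬ`, so
`ℬ ∨ β⁻¹𝒜β = 𝒜 ∨ ℬ`. The map `((𝒜,α), (ℬ,β)) ↦ ((ℬ,β), (β⁻¹𝒜β, β⁻¹αβ))` is a bijection of
pairs, and a multiplicative function is invariant under conjugation since conjugation carries
each block bijectively onto a block and preserves cycle types. Reindexing the sum defining
`f₁ ⊛ f₂` along this bijection turns it into `f₂ ⊛ f₁`.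
-/

namespace Equiv.Perm

theorem cycleType_permCongr {β γ : Type*} [Fintype β] [DecidableEq β] [Fintype γ]
    [DecidableEq γ] (e : β ≃ γ) (π : Perm β) :
    (e.permCongr π).cycleType = π.cycleType := by
  have h : e.permCongr π = π.extendDomain (e.trans (subtypeUnivEquiv fun _ => trivial).symm) := by
    ext x
    rw [extendDomain_apply_subtype _ _ (trivial : (fun _ : γ => True) x)]
    simp [permCongr_apply]
  rw [h, cycleType_extendDomain]

end Equiv.Perm

theorem fullCycleType_permCongr {β γ : Type*} [Finite β] [Finite γ] (e : β ≃ γ)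
    (π : Equiv.Perm β) : fullCycleType (e.permCongr π) = fullCycleType π := by
  unfold fullCycleType
  let _ : Fintype β := Fintype.ofFinite β
  let _ : Fintype γ := Fintype.ofFinite γ
  let _ : DecidableEq β := Classical.decEq β
  let _ : DecidableEq γ := Classical.decEq γ
  rw [Equiv.Perm.cycleType_permCongr, Nat.card_congr e]

theorem Setoid.comap_le_sup_of_rel_apply {α : Type*} (A B : Setoid α) {σ : α → α}
    (hσ : ∀ x, B.r x (σ x)) : A.comap σ ≤ A ⊔ B := by
  have hA : A ≤ A ⊔ B := le_sup_left
  have hB : B ≤ A ⊔ B := le_sup_right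
  intro x y hxy
  exact (A ⊔ B).trans (hB (hσ x)) ((A ⊔ B).trans (hA hxy) (hB (B.symm (hσ y))))

theorem Setoid.sup_comap_eq_sup_of_rel_apply {α : Type*} (A B : Setoid α) {σ : Equiv.Perm α}
    (hσ : ∀ x, B.r x (σ x)) : B ⊔ A.comap ⇑σ = A ⊔ B := by
  have hσinv : ∀ x, B.r x (σ⁻¹ x) := fun x => B.symm (by simpa using hσ (σ⁻¹ x))
  apply le_antisymm
  · exact sup_le le_sup_right (A.comap_le_sup_of_rel_apply B hσ)
  · refine sup_le ?_ le_sup_left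
    calc A = (A.comap σ).comap ⇑(σ⁻¹) := Setoid.ext fun x y => by simp [Setoid.comap_rel]
      _ ≤ A.comap σ ⊔ B := (A.comap σ).comap_le_sup_of_rel_apply B hσinv
      _ = B ⊔ A.comap σ := sup_comm _ _

namespace PartPerm

variable {d : ℕ}

theorem part_rel_perm_apply (p : PartPerm d) (x : Fin d) : p.part.r x (p.perm x) :=
  p.refines x (p.perm x) ⟨1, by simp⟩

/-- Conjugation `(𝒜,α) ↦ (σ⁻¹𝒜σ, σ⁻¹ασ)`. -/
def conjBy (p : PartPerm d) (σ : Equiv.Perm (Fin d)) : PartPerm d where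
  part := p.part.comap σ
  perm := σ⁻¹ * p.perm * σ
  refines x y h := p.refines _ _ <| by
    simpa [mul_assoc] using (Equiv.Perm.sameCycle_conj (g := σ⁻¹) (f := p.perm)).mp h

@[simp]
theorem conjBy_conjBy (p : PartPerm d) (σ τ : Equiv.Perm (Fin d)) :
    (p.conjBy σ).conjBy τ = p.conjBy (σ * τ) :=
  ext' rfl (by simp [conjBy, mul_assoc])

@[simp]
theorem conjBy_one (p : PartPerm d) : p.conjBy 1 = p :=
  ext' rfl (by simp [conjBy])

theorem mul_conjBy_perm (p q : PartPerm d) : q.mul (p.conjBy q.perm) = p.mul q :=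
  ext' (p.part.sup_comap_eq_sup_of_rel_apply q.part q.part_rel_perm_apply)
    (by simp [mul, conjBy, mul_assoc])

def swapConjEquiv (d : ℕ) : PartPerm d × PartPerm d ≃ PartPerm d × PartPerm d where
  toFun x := (x.2, x.1.conjBy x.2.perm)
  invFun x := (x.2.conjBy x.1.perm⁻¹, x.1)
  left_inv x := by simp
  right_inv x := by simp

theorem swapConjEquiv_apply (p q : PartPerm d) :
    swapConjEquiv d (p, q) = (q, p.conjBy q.perm) :=
  rfl

def conjByQuotientEquiv (p : PartPerm d) (σ : Equiv.Perm (Fin d)) :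
    Quotient (p.conjBy σ).part ≃ Quotient p.part :=
  Quotient.congr σ fun _ _ => Iff.rfl

def conjByBlockEquiv (p : PartPerm d) (σ : Equiv.Perm (Fin d)) (c : Quotient (p.conjBy σ).part) :
    {x // Quotient.mk (p.conjBy σ).part x = c} ≃
      {y // Quotient.mk p.part y = p.conjByQuotientEquiv σ c} :=
  σ.subtypeEquiv fun x => by
    rw [← (p.conjByQuotientEquiv σ).apply_eq_iff_eq]
    rfl

theorem blockPerm_conjByQuotientEquiv (p : PartPerm d) (σ : Equiv.Perm (Fin d))
    (c : Quotient (p.conjBy σ).part) :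
    blockPerm p (p.conjByQuotientEquiv σ c) =
      (p.conjByBlockEquiv σ c).permCongr (blockPerm (p.conjBy σ) c) := by
  refine Equiv.ext fun y => Subtype.ext ?_
  show p.perm y = σ ((σ⁻¹ * p.perm * σ) (σ.symm y))
  simp

end PartPerm

theorem IsMultiplicativeFn.map_conjBy {R : Type*} [CommRing R] {d : ℕ} {f : PartPerm d → R}
    (hf : IsMultiplicativeFn f) (p : PartPerm d) (σ : Equiv.Perm (Fin d)) :
    f (p.conjBy σ) = f p := by
  obtain ⟨g, hg⟩ := hf
  rw [hg, hg, ← finprod_comp_equiv (p.conjByQuotientEquiv σ)]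
  refine finprod_congr fun c => ?_
  rw [p.blockPerm_conjByQuotientEquiv, fullCycleType_permCongr]

theorem extConv_comm_of_multiplicative_general {R : Type*} [CommRing R] {d : ℕ}
    (f₁ f₂ : PartPerm d → R)
    (h₁ : IsMultiplicativeFn f₁) :
    extConv f₁ f₂ = extConv f₂ f₁ := by
  funext c
  unfold extConv
  conv_rhs => rw [← finsum_comp_equiv (PartPerm.swapConjEquiv d)]
  refine finsum_congr fun ⟨p, q⟩ => ?_
  rw [PartPerm.swapConjEquiv_apply, PartPerm.mul_conjBy_perm, h₁.map_conjBy, mul_comm]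

/-- Extended convolutions of multiplicative functions commute: `f₁ ⊛ f₂ = f₂ ⊛ f₁`. -/
theorem extConv_comm_of_multiplicative {R : Type*} [CommRing R] {d : ℕ}
    (f₁ f₂ : PartPerm d → R)
    (h₁ : IsMultiplicativeFn f₁) (h₂ : IsMultiplicativeFn f₂) :
    extConv f₁ f₂ = extConv f₂ f₁ :=
  extConv_comm_of_multiplicative_general f₁ f₂ h₁
end

section
/- Symmetric polynomials in the Jucys–Murphy elements J₂,…,J_d, where J_k = Σ_{i<k} (i k) in the group algebra ℚS(d), belong to the center of ℚS(d). -/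
open Equiv

/-- The Jucys–Murphy element `J_k = Σ_{i<k} (i k)` in the group algebra, for
`k = j + 2` with `j : Fin (d-1)` (so `k` ranges over `2, …, d`). -/
noncomputable def jucysMurphy (R : Type*) [CommRing R] (d : ℕ) (j : Fin (d - 1)) :
    MonoidAlgebra R (Equiv.Perm (Fin d)) :=
  ∑ i : Fin (j.val + 1),
    MonoidAlgebra.of R (Equiv.Perm (Fin d))
      (Equiv.swap (⟨i.val, by have := i.2; have := j.2; omega⟩ : Fin d)
        (⟨j.val + 1, by have := j.2; omega⟩ : Fin d))

/-! The adjacent transpositions `s = (a a+1)` generate `S(d)`, so it suffices that conjugation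
by `s` fixes `P(J)`. It fixes every `J_k` with `k ∉ {a, a+1}`, and `s J_a s = J_{a+1} - s`,
`s J_{a+1} s = J_a + s` (with `J_1 = 0`), so it also fixes `J_a + J_{a+1}` and `J_a J_{a+1}`.
As the `J_k` commute, `P(J)` is the image of `P` under an algebra map out of the polynomial ring,
and a polynomial symmetric in `x_a, x_{a+1}` lies in the subalgebra generated by `x_a + x_{a+1}`,
`x_a x_{a+1}` and the other variables. -/

open MvPolynomial MonoidAlgebra Finset

theorem pow_add_pow_mem {S T : Type*} [CommRing S] [SetLike T S] [SubringClass T S] {B : T}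
    {a b : S} (hadd : a + b ∈ B) (hmul : a * b ∈ B) (k : ℕ) : a ^ k + b ^ k ∈ B := by
  induction k using Nat.twoStepInduction with
  | zero => simpa using add_mem (one_mem B) (one_mem B)
  | one => simpa using hadd
  | more k ih₀ ih₁ =>
    have hrec : a ^ (k + 2) + b ^ (k + 2) =
        (a + b) * (a ^ (k + 1) + b ^ (k + 1)) - a * b * (a ^ k + b ^ k) := by ring
    rw [hrec]
    exact sub_mem (mul_mem hadd ih₁) (mul_mem hmul ih₀)

theorem pow_mul_pow_add_pow_mul_pow_mem {S T : Type*} [CommRing S] [SetLike T S]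
    [SubringClass T S] {B : T} {a b : S} (hadd : a + b ∈ B) (hmul : a * b ∈ B) (p q : ℕ) :
    a ^ p * b ^ q + b ^ p * a ^ q ∈ B := by
  induction q generalizing p with
  | zero => simpa using pow_add_pow_mem hadd hmul p
  | succ q ih =>
    cases p with
    | zero => simpa [add_comm] using pow_add_pow_mem hadd hmul (q + 1)
    | succ p =>
      have hfactor : a ^ (p + 1) * b ^ (q + 1) + b ^ (p + 1) * a ^ (q + 1) =
          a * b * (a ^ p * b ^ q + b ^ p * a ^ q) := by ring
      rw [hfactor]
      exact mul_mem hmul (ih p)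

namespace MvPolynomial

variable {K σ : Type*} [CommRing K]

theorem mem_of_rename_swap_eq [DecidableEq σ] [Invertible (2 : K)]
    {B : Subalgebra K (MvPolynomial σ K)} {u v : σ} (hadd : X u + X v ∈ B)
    (hmul : X u * X v ∈ B) (hX : ∀ k, k ≠ u → k ≠ v → X k ∈ B) {P : MvPolynomial σ K}
    (hP : rename (swap u v) P = P) : P ∈ B := by
  -- `X u ^ p * X v ^ q` carries the powers of `X u`, `X v` already split off from `Q`.
  have key : ∀ (Q : MvPolynomial σ K) (p q : ℕ),
      X u ^ p * X v ^ q * Q + X v ^ p * X u ^ q * rename (swap u v) Q ∈ B := by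
    intro Q
    induction Q using MvPolynomial.induction_on with
    | C c =>
      intro p q
      convert B.smul_mem (pow_mul_pow_add_pow_mul_pow_mem hadd hmul p q) c using 1
      simp only [rename_C, smul_eq_C_mul]
      ring
    | add Q₁ Q₂ h₁ h₂ =>
      intro p q
      convert add_mem (h₁ p q) (h₂ p q) using 1
      rw [map_add]
      ring
    | mul_X Q k ih =>
      intro p q
      rw [map_mul, rename_X]
      by_cases hu : k = u
      · subst hu
        convert ih (p + 1) q using 1
        rw [swap_apply_left]
        ring
      by_cases hv : k = v
      · subst hv
        convert ih p (q + 1) using 1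
        rw [swap_apply_right]
        ring
      convert mul_mem (ih p q) (hX k hu hv) using 1
      rw [swap_apply_of_ne_of_ne hu hv]
      ring
  have hPP : P + P ∈ B := by simpa [hP] using key P 0 0
  have hhalf : P = (⅟2 : K) • (P + P) := by
    rw [← two_smul K P, smul_smul, invOf_mul_self, one_smul]
  rw [hhalf]
  exact B.smul_mem hPP _

section aevalOfCommute

open scoped IsMulCommutative

variable {A : Type*} [Ring A] [Algebra K A]

theorem isMulCommutative_adjoin_range {x : σ → A} (hx : ∀ i j, Commute (x i) (x j)) :
    IsMulCommutative (Algebra.adjoin K (Set.range x)) :=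
  Algebra.isMulCommutative_adjoin K (by rintro _ ⟨i, rfl⟩ _ ⟨j, rfl⟩; exact (hx i j).eq)

noncomputable def aevalOfCommute {x : σ → A} (hx : ∀ i j, Commute (x i) (x j)) :
    MvPolynomial σ K →ₐ[K] A :=
  haveI := isMulCommutative_adjoin_range (K := K) hx
  (Algebra.adjoin K (Set.range x)).val.comp
    (aeval fun i => ⟨x i, Algebra.subset_adjoin ⟨i, rfl⟩⟩)

variable {x y : σ → A} (hx : ∀ i j, Commute (x i) (x j))

@[simp]
theorem aevalOfCommute_X (i : σ) : aevalOfCommute (K := K) hx (X i) = x i := by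
  simp [aevalOfCommute]

theorem map_aevalOfCommute {B F : Type*} [Ring B] [Algebra K B] [FunLike F A B]
    [AlgHomClass F K A B] (f : F) (P : MvPolynomial σ K) :
    f (aevalOfCommute hx P) = aevalOfCommute (fun i j => (hx i j).map f) P :=
  DFunLike.congr_fun (algHom_ext (f := (AlgHomClass.toAlgHom f).comp (aevalOfCommute hx))
    fun i => by simp) P

theorem aevalOfCommute_eq_sum {n : ℕ} {x : Fin n → A} (hx : ∀ i j, Commute (x i) (x j))
    (P : MvPolynomial (Fin n) K) :
    aevalOfCommute hx P = ∑ m ∈ P.support, P.coeff m • (List.ofFn fun k => x k ^ m k).prod := by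
  have := isMulCommutative_adjoin_range (K := K) hx
  simp only [aevalOfCommute, AlgHom.comp_apply, aeval_def, eval₂_eq', map_sum, map_mul]
  refine Finset.sum_congr rfl fun m _ => ?_
  rw [Algebra.smul_def, ← List.prod_ofFn, map_list_prod, List.map_ofFn]
  rfl

theorem aevalOfCommute_eq_of_rename_swap_eq [DecidableEq σ] [Invertible (2 : K)]
    (hy : ∀ i j, Commute (y i) (y j)) {u v : σ} (hX : ∀ k, k ≠ u → k ≠ v → y k = x k)
    (hadd : y u + y v = x u + x v) (hmul : y u * y v = x u * x v) {P : MvPolynomial σ K}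
    (hP : rename (swap u v) P = P) : aevalOfCommute hy P = aevalOfCommute hx P :=
  mem_of_rename_swap_eq (B := AlgHom.equalizer (aevalOfCommute hy) (aevalOfCommute hx))
    (by simp [hadd]) (by simp [hmul]) (fun k hku hkv => by simp [hX k hku hkv]) hP

end aevalOfCommute

end MvPolynomial

namespace MonoidAlgebra

variable {R G : Type*} [CommRing R] [Group G]

noncomputable def conjAlgEquiv (g : G) : MonoidAlgebra R G ≃ₐ[R] MonoidAlgebra R G :=
  domCongr R R (MulAut.conj g)

theorem conjAlgEquiv_of (g h : G) :
    conjAlgEquiv g (of R G h) = of R G (g * h * g⁻¹) := by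
  simp [conjAlgEquiv, of_apply, domCongr_single]

theorem of_mul_eq_conjAlgEquiv_mul (g : G) (x : MonoidAlgebra R G) :
    of R G g * x = conjAlgEquiv g x * of R G g := by
  induction x using MonoidAlgebra.induction_on with
  | of h => rw [conjAlgEquiv_of, ← map_mul, ← map_mul, inv_mul_cancel_right]
  | add x y hx hy => rw [mul_add, hx, hy, map_add, add_mul]
  | smul r x hx => rw [mul_smul_comm, hx, map_smul, smul_mul_assoc]

theorem commute_of_conjAlgEquiv_eq {g : G} {x : MonoidAlgebra R G}
    (h : conjAlgEquiv g x = x) : Commute (of R G g) x := by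
  rw [Commute, SemiconjBy, of_mul_eq_conjAlgEquiv_mul, h]

theorem mem_center_of_commute_of_closure_eq_top {S : Set G} (hS : Submonoid.closure S = ⊤)
    {z : MonoidAlgebra R G} (hz : ∀ g ∈ S, Commute (of R G g) z) :
    z ∈ Subalgebra.center R (MonoidAlgebra R G) := by
  have hof : ∀ g, Commute (of R G g) z := by
    intro g
    induction (hS ▸ Submonoid.mem_top g : g ∈ Submonoid.closure S) using
      Submonoid.closure_induction with
    | mem g hg => exact hz g hg
    | one => simp
    | mul g h _ _ hg hh => simpa using hg.mul_left hh
  rw [Subalgebra.mem_center_iff]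
  intro b
  induction b using MonoidAlgebra.induction_on with
  | of g => exact hof g
  | add x y hx hy => rw [add_mul, mul_add, hx, hy]
  | smul r x hx => rw [smul_mul_assoc, mul_smul_comm, hx]

theorem conjAlgEquiv_of_swap {α : Type*} [DecidableEq α] (g : Perm α) (i j : α) :
    conjAlgEquiv g (of R (Perm α) (swap i j)) = of R (Perm α) (swap (g i) (g j)) := by
  rw [conjAlgEquiv_of, swap_apply_apply]

end MonoidAlgebra

theorem Equiv.swap_apply_lt {α : Type*} [LinearOrder α] {a b i k : α} (ha : a < k) (hb : b < k)
    (hi : i < k) : swap a b i < k := by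
  rw [swap_apply_def]
  split_ifs <;> assumption

section JucysMurphyAt

variable (R : Type*) [CommRing R] {α : Type*} [LinearOrder α] [LocallyFiniteOrderBot α]

noncomputable def jucysMurphyAt (k : α) : MonoidAlgebra R (Perm α) :=
  ∑ i ∈ Iio k, of R (Perm α) (swap i k)

theorem jucysMurphy_eq_jucysMurphyAt {n : ℕ} (j : Fin n) :
    jucysMurphy R (n + 1) j = jucysMurphyAt R j.succ :=
  sum_bij' (fun i _ => ⟨i, by omega⟩) (fun k hk => ⟨k, by simpa [Fin.lt_def] using hk⟩)
    (fun i _ => by simp [Fin.lt_def]; omega) (fun _ _ => mem_univ _) (fun _ _ => rfl)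
    (fun _ _ => rfl) (fun _ _ => rfl)

variable {R}

theorem jucysMurphyAt_of_covBy {a b : α} (h : a ⋖ b) :
    jucysMurphyAt R b = ∑ i ∈ Iio a, of R (Perm α) (swap i b) + of R (Perm α) (swap a b) := by
  have hIio : Iio b = insert a (Iio a) := by
    rw [Iio_insert, ← coe_inj, coe_Iio, coe_Iic, h.Iio_eq]
  rw [jucysMurphyAt, hIio, sum_insert notMem_Iio_self, add_comm]

theorem conjAlgEquiv_jucysMurphyAt_of_mapsTo {g : Perm α} {k : α} (hk : g k = k)
    (hg : Set.MapsTo g (Set.Iio k) (Set.Iio k)) :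
    conjAlgEquiv g (jucysMurphyAt R k) = jucysMurphyAt R k := by
  have hmap : (Iio k).map g.toEmbedding = Iio k :=
    eq_of_subset_of_card_le (fun i hi => by
      obtain ⟨j, hj, rfl⟩ := mem_map.mp hi
      exact mem_Iio.mpr (hg (mem_Iio.mp hj))) (by simp)
  simp only [jucysMurphyAt, map_sum, conjAlgEquiv_of_swap, hk]
  conv_rhs => rw [← hmap, sum_map]
  rfl

theorem commute_jucysMurphyAt (i k : α) : Commute (jucysMurphyAt R i) (jucysMurphyAt R k) := by
  wlog hik : i < k generalizing i k
  · obtain rfl | hki := eq_or_lt_of_not_gt hik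
    · exact Commute.refl _
    · exact (this k i hki).symm
  refine Commute.sum_left _ _ _ fun c hc => commute_of_conjAlgEquiv_eq ?_
  have hck : c < k := (mem_Iio.mp hc).trans hik
  exact conjAlgEquiv_jucysMurphyAt_of_mapsTo (swap_apply_of_ne_of_ne hck.ne' hik.ne')
    fun j hj => swap_apply_lt hck hik hj

theorem conjAlgEquiv_swap_jucysMurphyAt_right {a b : α} (h : a ⋖ b) :
    conjAlgEquiv (swap a b) (jucysMurphyAt R b) =
      jucysMurphyAt R a + of R (Perm α) (swap a b) := by
  rw [jucysMurphyAt_of_covBy h, map_add, map_sum, conjAlgEquiv_of, mul_inv_cancel_right,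
    jucysMurphyAt]
  refine congrArg (· + _) (sum_congr rfl fun i hi => ?_)
  have hia : i < a := mem_Iio.mp hi
  rw [conjAlgEquiv_of_swap, swap_apply_of_ne_of_ne hia.ne (hia.trans h.lt).ne, swap_apply_right]

theorem conjAlgEquiv_swap_jucysMurphyAt_left {a b : α} (h : a ⋖ b) :
    conjAlgEquiv (swap a b) (jucysMurphyAt R a) =
      jucysMurphyAt R b - of R (Perm α) (swap a b) := by
  rw [jucysMurphyAt_of_covBy h, add_sub_cancel_right, jucysMurphyAt, map_sum]
  refine sum_congr rfl fun i hi => ?_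
  have hia : i < a := mem_Iio.mp hi
  rw [conjAlgEquiv_of_swap, swap_apply_of_ne_of_ne hia.ne (hia.trans h.lt).ne, swap_apply_left]

theorem conjAlgEquiv_swap_jucysMurphyAt_mul {a b : α} (h : a ⋖ b) :
    conjAlgEquiv (swap a b) (jucysMurphyAt R a) * conjAlgEquiv (swap a b) (jucysMurphyAt R b) =
      jucysMurphyAt R a * jucysMurphyAt R b := by
  set s := of R (Perm α) (swap a b)
  have hss : s * s = 1 := by rw [← map_mul, swap_mul_self, map_one]
  have hsa : s * jucysMurphyAt R a = jucysMurphyAt R b * s - 1 := by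
    rw [of_mul_eq_conjAlgEquiv_mul, conjAlgEquiv_swap_jucysMurphyAt_left h, sub_mul, hss]
  rw [conjAlgEquiv_swap_jucysMurphyAt_left h, conjAlgEquiv_swap_jucysMurphyAt_right h]
  calc (jucysMurphyAt R b - s) * (jucysMurphyAt R a + s)
      = jucysMurphyAt R b * jucysMurphyAt R a + jucysMurphyAt R b * s - s * jucysMurphyAt R a
          - s * s := by noncomm_ring
    _ = jucysMurphyAt R b * jucysMurphyAt R a := by rw [hsa, hss]; abel
    _ = jucysMurphyAt R a * jucysMurphyAt R b := (commute_jucysMurphyAt b a).eq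

theorem conjAlgEquiv_swap_jucysMurphyAt_of_ne {a b k : α} (h : a ⋖ b) (hka : k ≠ a)
    (hkb : k ≠ b) : conjAlgEquiv (swap a b) (jucysMurphyAt R k) = jucysMurphyAt R k := by
  refine conjAlgEquiv_jucysMurphyAt_of_mapsTo (swap_apply_of_ne_of_ne hka hkb) fun i hik => ?_
  rcases hka.lt_or_gt with hka | hak
  · rw [swap_apply_of_ne_of_ne (hik.trans hka).ne (hik.trans (hka.trans h.lt)).ne]
    exact hik
  · exact swap_apply_lt hak ((not_lt.mp (h.2 hak)).lt_of_ne hkb.symm) hik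

end JucysMurphyAt

theorem Fin.castSucc_covBy_succ {n : ℕ} (a : Fin n) : a.castSucc ⋖ a.succ :=
  ⟨castSucc_lt_succ, fun c h₁ h₂ => by simp only [Fin.lt_def, val_castSucc, val_succ] at *; omega⟩

theorem conjAlgEquiv_swap_aevalOfCommute_jucysMurphyAt {R : Type*} [CommRing R]
    [Invertible (2 : R)] {n : ℕ} {P : MvPolynomial (Fin n) R} (hP : P.IsSymmetric) (a : Fin n) :
    conjAlgEquiv (swap a.castSucc a.succ)
        (aevalOfCommute (fun i j : Fin n => commute_jucysMurphyAt (R := R) i.succ j.succ) P) =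
      aevalOfCommute (fun i j : Fin n => commute_jucysMurphyAt (R := R) i.succ j.succ) P := by
  have hcov := a.castSucc_covBy_succ
  rw [map_aevalOfCommute]
  by_cases ha : a.castSucc = 0
  · have hfix : conjAlgEquiv (swap a.castSucc a.succ) (jucysMurphyAt R a.succ) =
        jucysMurphyAt R a.succ := by
      have h0 : jucysMurphyAt R a.castSucc = 0 := by
        rw [ha, jucysMurphyAt, ← bot_eq_zero, Iio_bot, sum_empty]
      have h1 := conjAlgEquiv_swap_jucysMurphyAt_left (R := R) hcov
      rw [h0, map_zero, eq_comm, sub_eq_zero] at h1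
      rw [h1, conjAlgEquiv_of, mul_inv_cancel_right]
    apply aevalOfCommute_eq_of_rename_swap_eq (u := a) (v := a) (hP := hP _)
    · exact fun k hk _ => conjAlgEquiv_swap_jucysMurphyAt_of_ne hcov (by simp [ha])
        (by simpa using hk)
    · rw [hfix]
    · rw [hfix]
  · have hu : (a.castSucc.pred ha).succ = a.castSucc := Fin.succ_pred _ _
    apply aevalOfCommute_eq_of_rename_swap_eq (u := a.castSucc.pred ha) (v := a)
      (hP := hP _)
    · refine fun k hku hka => conjAlgEquiv_swap_jucysMurphyAt_of_ne hcov (fun h => hku ?_)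
        (by simpa using hka)
      rwa [← Fin.succ_inj, hu]
    · simp only [hu, conjAlgEquiv_swap_jucysMurphyAt_left hcov,
        conjAlgEquiv_swap_jucysMurphyAt_right hcov]
      abel
    · simp only [hu]
      exact conjAlgEquiv_swap_jucysMurphyAt_mul hcov

/-- Symmetric polynomials in the Jucys–Murphy elements `J₂, …, J_d` belong to the center
of the group algebra `ℚS(d)`. (The evaluation of a polynomial at the `J_k`'s is taken
with a fixed ordering of the variables in each monomial.) -/
theorem symmetric_jucysMurphy_mem_center (d : ℕ) (P : MvPolynomial (Fin (d - 1)) ℚ)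
    (hP : P.IsSymmetric) :
    (∑ m ∈ P.support, P.coeff m •
        (List.ofFn (fun k : Fin (d - 1) => jucysMurphy ℚ d k ^ m k)).prod) ∈
      Subalgebra.center ℚ (MonoidAlgebra ℚ (Equiv.Perm (Fin d))) := by
  obtain _ | n := d
  · exact mem_center_of_commute_of_closure_eq_top (S := ∅) (Subsingleton.elim _ _) (by simp)
  have hJ (i j : Fin n) := commute_jucysMurphyAt (R := ℚ) i.succ j.succ
  have hcenter : aevalOfCommute hJ P ∈ Subalgebra.center ℚ _ := by
    refine mem_center_of_commute_of_closure_eq_top (Perm.mclosure_swap_castSucc_succ n) ?_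
    rintro _ ⟨a, rfl⟩
    exact commute_of_conjAlgEquiv_eq (conjAlgEquiv_swap_aevalOfCommute_jucysMurphyAt hP a)
  rw [aevalOfCommute_eq_sum] at hcenter
  simp only [jucysMurphy_eq_jucysMurphyAt]
  exact hcenter
end

section
/- Every permutation of [d] can be expressed uniquely as a product of transpositions along a strictly monotone sequence; consequently, the strictly monotone Hurwitz number equals the free single Hurwitz number: H^<_r(λ,ν) = H^|_r(λ,ν) for all r ≥ 0 and λ, ν ⊢ d. -/
open Equiv

/-- The conjugacy class `C_λ ⊆ S(d)` of permutations of cycle type `λ ⊢ d`. -/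
noncomputable def conjClass {d : ℕ} (lam : Nat.Partition d) : Finset (Equiv.Perm (Fin d)) :=
  open scoped Classical in
  Finset.univ.filter fun σ => fullCycleType σ = lam.parts

/-- The symmetry factor `z(λ) = d! / #C_λ`. -/
noncomputable def zsym {d : ℕ} (lam : Nat.Partition d) : ℚ :=
  (d.factorial : ℚ) / (conjClass lam).card

/-- Tuples `(α, τ₁, …, τ_r, β)` with `α ∈ C_λ`, `β ∈ C_ν`, the `τ_i` a strictly monotone
sequence of transpositions (the larger moved points strictly increase), and
`α ∘ τ₁ ∘ ⋯ ∘ τ_r ∘ β = id`. -/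
def strictMonotoneTuples {d : ℕ} (r : ℕ) (lam nu : Nat.Partition d) :
    Set (Equiv.Perm (Fin d) × (Fin r → Equiv.Perm (Fin d)) × Equiv.Perm (Fin d)) :=
  {t | fullCycleType t.1 = lam.parts ∧ fullCycleType t.2.2 = nu.parts ∧
    (∀ i, Equiv.Perm.IsSwap (t.2.1 i)) ∧
    (∀ i j : Fin r, i < j → (t.2.1 i).support.max < (t.2.1 j).support.max) ∧
    t.1 * (List.ofFn t.2.1).prod * t.2.2 = 1}

/-- Analogous tuples with weakly monotone sequences of transpositions. -/
def weakMonotoneTuples {d : ℕ} (r : ℕ) (lam nu : Nat.Partition d) :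
    Set (Equiv.Perm (Fin d) × (Fin r → Equiv.Perm (Fin d)) × Equiv.Perm (Fin d)) :=
  {t | fullCycleType t.1 = lam.parts ∧ fullCycleType t.2.2 = nu.parts ∧
    (∀ i, Equiv.Perm.IsSwap (t.2.1 i)) ∧
    (∀ i j : Fin r, i < j → (t.2.1 i).support.max ≤ (t.2.1 j).support.max) ∧
    t.1 * (List.ofFn t.2.1).prod * t.2.2 = 1}

/-- The strictly monotone Hurwitz number `H^<_r(λ,ν)`. -/
noncomputable def Hlt {d : ℕ} (r : ℕ) (lam nu : Nat.Partition d) : ℚ :=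
  (Nat.card (strictMonotoneTuples r lam nu) : ℚ) / d.factorial

/-- The weakly monotone Hurwitz number `H^≤_r(λ,ν)`. -/
noncomputable def Hle {d : ℕ} (r : ℕ) (lam nu : Nat.Partition d) : ℚ :=
  (Nat.card (weakMonotoneTuples r lam nu) : ℚ) / d.factorial

/-- The generating series `H^<(λ,ν) = Σ_{r=0}^{d-1} ℏ^r H^<_r(λ,ν)`. -/
noncomputable def HltSeries {d : ℕ} (lam nu : Nat.Partition d) : PowerSeries ℚ :=
  ∑ r ∈ Finset.range (d - 1 + 1),
    PowerSeries.C (Hlt r lam nu) * (PowerSeries.X : PowerSeries ℚ) ^ r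

/-- The generating series `H^≤(λ,ν) = Σ_{r ≥ 0} (-ℏ)^r H^≤_r(λ,ν)`. -/
noncomputable def HleSeries {d : ℕ} (lam nu : Nat.Partition d) : PowerSeries ℚ :=
  PowerSeries.mk fun r => (-1 : ℚ) ^ r * Hle r lam nu

/-- The free single Hurwitz number `H^|_r(λ,ν)`: it counts (divided by `d!`) triples
`(α, ψ, β)` with `α ∈ C_λ`, `β ∈ C_ν`, `ψ` of colength `r` (colength = `d - #cycles`),
and `α ∘ ψ ∘ β = id`. -/
noncomputable def Hfree {d : ℕ} (r : ℕ) (lam nu : Nat.Partition d) : ℚ :=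
  (Nat.card {t : Equiv.Perm (Fin d) × Equiv.Perm (Fin d) × Equiv.Perm (Fin d) //
      fullCycleType t.1 = lam.parts ∧ fullCycleType t.2.2 = nu.parts ∧
      d - (fullCycleType t.2.1).card = r ∧ (fullCycleType t.2.1).card = d - r ∧
      t.1 * t.2.1 * t.2.2 = 1} : ℚ) / d.factorial

/-!
The last transposition `(a b)` of a strictly monotone factorization of `σ` is forced: `b` is the
largest point moved by `σ` and `a = σ⁻¹ b`. Peeling it off leaves `σ * (a b)`, which fixes `b` and
every larger point, so induction gives existence and uniqueness. Since `σ * (a b) = (b (σ b)) * σ`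
splits `b` off its cycle, each step adds one cycle, so the factorization of `σ` has length equal to
the colength of `σ`. Hence `(α, τ, β) ↦ (α, τ₁ ⋯ τ_r, β)` is a bijection between the tuples
counted by `H^<_r` and those counted by `H^|_r`.
-/

open Finset

namespace Equiv.Perm

section CycleCount

variable {α : Type*} [Fintype α] [DecidableEq α]

theorem card_parts_partition (σ : Perm α) :
    σ.partition.parts.card = σ.cycleType.card + (Fintype.card α - #σ.support) := by
  simp [parts_partition]

theorem card_parts_partition_one :
    (1 : Perm α).partition.parts.card = Fintype.card α := by
  simp [card_parts_partition]

theorem Disjoint.card_parts_partition_mul {σ τ : Perm α} (h : σ.Disjoint τ) :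
    (σ * τ).partition.parts.card + Fintype.card α =
      σ.partition.parts.card + τ.partition.parts.card := by
  have hle : #σ.support + #τ.support ≤ Fintype.card α :=
    h.card_support_mul ▸ card_le_univ _
  simp only [card_parts_partition, h.cycleType_mul, h.card_support_mul, Multiset.card_add]
  omega

theorem IsCycle.card_parts_partition_swap_mul {c : Perm α} (hc : c.IsCycle) {x : α}
    (hx : c x ≠ x) :
    (swap x (c x) * c).partition.parts.card = c.partition.parts.card + 1 := by
  have hle := card_le_univ c.support
  have hx_mem : x ∈ c.support := mem_support.mpr hx
  by_cases hcc : c (c x) = x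
  · have hswap := hc.eq_swap_of_apply_apply_eq_self hx hcc
    have hone : swap x (c x) * c = 1 := by
      nth_rewrite 2 [hswap]
      exact swap_mul_self _ _
    have htwo : #c.support = 2 := by rw [hswap, card_support_swap hx.symm]
    rw [hone, card_parts_partition_one, card_parts_partition, hc.cycleType, htwo]
    simp only [Multiset.card_singleton]
    omega
  · have hsupp : #(swap x (c x) * c).support = #c.support - 1 := by
      rw [support_swap_mul_eq c x hcc, card_sdiff_of_subset (singleton_subset_iff.mpr hx_mem),
        card_singleton]
    rw [card_parts_partition, card_parts_partition, (hc.swap_mul hx hcc).cycleType, hc.cycleType,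
      hsupp]
    simp only [Multiset.card_singleton]
    have : 0 < #c.support := card_pos.mpr ⟨x, hx_mem⟩
    omega

-- Writing `f = c * r` with `c` the cycle through `x`, only `c` changes: it loses `x`, which
-- becomes a fixed point.
theorem card_parts_partition_swap_mul (f : Perm α) {x : α} (hx : f x ≠ x) :
    (swap x (f x) * f).partition.parts.card = f.partition.parts.card + 1 := by
  set c := f.cycleOf x
  set r := f * c⁻¹
  have hc : c ∈ f.cycleFactorsFinset := cycleOf_mem_cycleFactorsFinset_iff.mpr (mem_support.mpr hx)
  have hcx : c x = f x := cycleOf_apply_self f x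
  have hdisj : c.Disjoint r := (disjoint_mul_inv_of_mem_cycleFactorsFinset hc).symm
  have hf : c * r = f := by rw [hdisj.commute.eq, inv_mul_cancel_right]
  have hdisj' : (swap x (c x) * c).Disjoint r :=
    hdisj.mono (fun y hy => (mem_support_swap_mul_imp_mem_support_ne hy).1) le_rfl
  have hsplit := hdisj'.card_parts_partition_mul
  have hmerge := hdisj.card_parts_partition_mul
  rw [(mem_cycleFactorsFinset_iff.mp hc).1.card_parts_partition_swap_mul (hcx ▸ hx), mul_assoc,
    hf, hcx] at hsplit
  rw [hf] at hmerge
  omega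

end CycleCount

section StrictMonoFactorization

variable {α : Type*} [LinearOrder α]

theorem IsSwap.exists_lt {τ : Perm α} (h : τ.IsSwap) : ∃ a b, a < b ∧ τ = swap a b := by
  obtain ⟨x, y, hxy, rfl⟩ := h
  rcases hxy.lt_or_gt with h | h
  · exact ⟨x, y, h, rfl⟩
  · exact ⟨y, x, h, swap_comm x y⟩

variable [Fintype α]

theorem support_max_lt_iff {σ : Perm α} {b : α} :
    σ.support.max < b ↔ ∀ y ∈ σ.support, y < b := by
  rw [max_eq_sup_coe, Finset.sup_lt_iff (WithBot.bot_lt_coe b)]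
  simp only [WithBot.coe_lt_coe]

theorem apply_eq_self_of_support_max_lt {σ : Perm α} {b y : α} (h : σ.support.max < b)
    (hy : b ≤ y) : σ y = y :=
  notMem_support.mp fun hmem => (support_max_lt_iff.mp h y hmem).not_ge hy

theorem support_max_list_prod_lt {l : List (Perm α)} {b : α}
    (h : ∀ τ ∈ l, τ.support.max < b) : l.prod.support.max < b := by
  have hmem : ∀ σ : Perm α, σ.support.max < b ↔ σ ∈ fixingSubgroup (Perm α) (Set.Ici b) := by
    intro σ
    rw [mem_fixingSubgroup_iff, support_max_lt_iff]
    exact ⟨fun h y hy => apply_eq_self_of_support_max_lt (support_max_lt_iff.mpr h) hy,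
      fun h y hy => lt_of_not_ge fun hby => mem_support.mp hy (h y hby)⟩
  exact (hmem _).mpr (Subgroup.list_prod_mem _ fun τ hτ => (hmem τ).mp (h τ hτ))

theorem support_max_swap {a b : α} (h : a < b) : (swap a b).support.max = b := by
  rw [support_swap h.ne, max_insert, max_singleton]
  exact max_eq_right (WithBot.coe_le_coe.mpr h.le)

def IsStrictMonoSwapList (l : List (Perm α)) : Prop :=
  (∀ τ ∈ l, τ.IsSwap) ∧ l.Pairwise (fun τ τ' => τ.support.max < τ'.support.max)

theorem isStrictMonoSwapList_nil : IsStrictMonoSwapList ([] : List (Perm α)) := by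
  simp [IsStrictMonoSwapList]

theorem isStrictMonoSwapList_append_swap {l : List (Perm α)} {a b : α} (hab : a < b) :
    IsStrictMonoSwapList (l ++ [swap a b]) ↔
      IsStrictMonoSwapList l ∧ ∀ τ ∈ l, τ.support.max < b := by
  simp only [IsStrictMonoSwapList, List.forall_mem_append,
    List.pairwise_append, List.pairwise_singleton, List.mem_singleton, forall_eq,
    support_max_swap hab]
  exact ⟨fun ⟨⟨hs, _⟩, hp, _, hlt⟩ => ⟨⟨hs, hp⟩, hlt⟩,
    fun ⟨⟨hs, hp⟩, hlt⟩ => ⟨⟨hs, ⟨_, _, hab.ne, rfl⟩⟩, hp, trivial, hlt⟩⟩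

theorem IsStrictMonoSwapList.eq_nil_or_eq_append {l : List (Perm α)}
    (hl : IsStrictMonoSwapList l) :
    l = [] ∨ ∃ (l' : List (Perm α)) (a b : α), a < b ∧ l = l' ++ [swap a b] ∧
      IsStrictMonoSwapList l' ∧ ∀ τ ∈ l', τ.support.max < b := by
  rcases l.eq_nil_or_concat with rfl | ⟨l', τ, rfl⟩
  · exact Or.inl rfl
  rw [List.concat_eq_append] at hl ⊢
  obtain ⟨a, b, hab, rfl⟩ := (hl.1 τ (by simp)).exists_lt
  exact Or.inr ⟨l', a, b, hab, rfl, (isStrictMonoSwapList_append_swap hab).mp hl⟩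

theorem prod_mul_swap_of_support_max_lt {l : List (Perm α)} {a b : α} (hab : a < b)
    (hl : ∀ τ ∈ l, τ.support.max < b) :
    (l.prod * swap a b).support.max = b ∧ (l.prod * swap a b) a = b := by
  have hfix : ∀ y, b ≤ y → l.prod y = y :=
    fun _ => apply_eq_self_of_support_max_lt (support_max_list_prod_lt hl)
  have hb : (l.prod * swap a b) b ≠ b := by
    rw [mul_apply, swap_apply_right]
    exact fun h => hab.ne (l.prod.injective (h.trans (hfix b le_rfl).symm))
  refine ⟨le_antisymm (Finset.max_le fun y hy => ?_) (le_max (mem_support.mpr hb)), ?_⟩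
  · by_contra! hby
    rw [WithBot.coe_lt_coe] at hby
    apply mem_support.mp hy
    rw [mul_apply, swap_apply_of_ne_of_ne (hab.trans hby).ne' hby.ne', hfix y hby.le]
  · rw [mul_apply, swap_apply_left, hfix b le_rfl]

theorem IsStrictMonoSwapList.eq_nil_of_prod_eq_one {l : List (Perm α)}
    (hl : IsStrictMonoSwapList l) (h : l.prod = 1) : l = [] := by
  rcases hl.eq_nil_or_eq_append with hnil | ⟨l', a, b, hab, rfl, -, hlt⟩
  · exact hnil
  have hσa := (prod_mul_swap_of_support_max_lt hab hlt).2
  rw [List.prod_append, List.prod_singleton] at h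
  rw [h, one_apply] at hσa
  exact absurd hσa hab.ne

theorem IsStrictMonoSwapList.eq_of_prod_eq {l₁ l₂ : List (Perm α)}
    (h₁ : IsStrictMonoSwapList l₁) (h₂ : IsStrictMonoSwapList l₂) (h : l₁.prod = l₂.prod) :
    l₁ = l₂ := by
  induction l₁ using List.reverseRecOn generalizing l₂ with
  | nil => exact (h₂.eq_nil_of_prod_eq_one h.symm).symm
  | append_singleton l₁ τ ih =>
    obtain ⟨a, b, hab, rfl⟩ := (h₁.1 τ (by simp)).exists_lt
    obtain ⟨h₁', hlt₁⟩ := (isStrictMonoSwapList_append_swap hab).mp h₁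
    rcases h₂.eq_nil_or_eq_append with rfl | ⟨l₂, a', b', hab', rfl, h₂', hlt₂⟩
    · exact absurd (h₁.eq_nil_of_prod_eq_one h) (by simp)
    simp only [List.prod_append, List.prod_singleton] at h
    obtain ⟨hmax₁, hσa₁⟩ := prod_mul_swap_of_support_max_lt hab hlt₁
    obtain ⟨hmax₂, hσa₂⟩ := prod_mul_swap_of_support_max_lt hab' hlt₂
    have hb : b = b' := WithBot.coe_injective (hmax₁.symm.trans (h ▸ hmax₂))
    subst hb
    rw [h] at hσa₁
    have ha : a = a' := (l₂.prod * swap a' b).injective (hσa₁.trans hσa₂.symm)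
    subst ha
    rw [ih h₁' h₂' (mul_right_cancel h)]

theorem IsStrictMonoSwapList.length_add_card_parts_partition {l : List (Perm α)}
    (hl : IsStrictMonoSwapList l) :
    l.length + l.prod.partition.parts.card = Fintype.card α := by
  induction l using List.reverseRecOn with
  | nil => simp [card_parts_partition_one]
  | append_singleton l τ ih =>
    obtain ⟨a, b, hab, rfl⟩ := (hl.1 τ (by simp)).exists_lt
    obtain ⟨hl', hlt⟩ := (isStrictMonoSwapList_append_swap hab).mp hl
    rw [List.prod_append, List.prod_singleton, List.length_append, List.length_singleton]
    set σ := l.prod * swap a b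
    have hσa : σ a = b := (prod_mul_swap_of_support_max_lt hab hlt).2
    have hσb : σ b ≠ b := fun h => hab.ne (σ.injective (hσa.trans h.symm))
    have hprod : swap b (σ b) * σ = l.prod := by
      rw [← hσa, ← mul_swap_eq_swap_mul, hσa, mul_swap_mul_self]
    have hcard := card_parts_partition_swap_mul σ hσb
    rw [hprod] at hcard
    have := ih hl'
    omega

theorem exists_isStrictMonoSwapList_prod_eq (σ : Perm α) :
    ∃ l, IsStrictMonoSwapList l ∧ l.prod = σ ∧ ∀ τ ∈ l, τ.support.max ≤ σ.support.max := by
  induction hn : #σ.support using Nat.strong_induction_on generalizing σ with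
  | _ n ih =>
  rcases σ.support.eq_empty_or_nonempty with h | hne
  · exact ⟨[], isStrictMonoSwapList_nil, (support_eq_empty_iff.mp h).symm, by simp⟩
  set b := σ.support.max' hne
  set a := σ⁻¹ b
  have hσa : σ a = b := σ.apply_symm_apply b
  have hσb : σ b ≠ b := mem_support.mp (max'_mem _ hne)
  have hab_ne : a ≠ b := fun h => hσb (h ▸ hσa)
  have hab : a < b := (le_max' _ a (mem_support.mpr (hσa ▸ hab_ne.symm))).lt_of_ne hab_ne
  have hσ' : swap b (σ b) * σ * swap a b = σ := by
    rw [← hσa, ← mul_swap_eq_swap_mul, hσa, mul_swap_mul_self]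
  have hlt' : (swap b (σ b) * σ).support.max < b := support_max_lt_iff.mpr fun y hy =>
    have hy := mem_support_swap_mul_imp_mem_support_ne hy
    (le_max' _ y hy.1).lt_of_ne hy.2
  obtain ⟨l', hl', hprod', hbound'⟩ := ih _ (hn ▸ card_support_swap_mul hσb) _ rfl
  have hlt : ∀ τ ∈ l', τ.support.max < b := fun τ hτ => (hbound' τ hτ).trans_lt hlt'
  refine ⟨l' ++ [swap a b], (isStrictMonoSwapList_append_swap hab).mpr ⟨hl', hlt⟩, ?_, ?_⟩
  · rw [List.prod_append, List.prod_singleton, hprod', hσ']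
  · rw [← coe_max' hne]
    simp only [List.mem_append, List.mem_singleton]
    rintro τ (hτ | rfl)
    · exact (hlt τ hτ).le
    · exact (support_max_swap hab).le

theorem existsUnique_isStrictMonoSwapList_prod_eq (σ : Perm α) :
    ∃! l, IsStrictMonoSwapList l ∧ l.prod = σ :=
  let ⟨l, hl, hprod, _⟩ := exists_isStrictMonoSwapList_prod_eq σ
  ⟨l, ⟨hl, hprod⟩, fun _ h => h.1.eq_of_prod_eq hl (h.2.trans hprod.symm)⟩

end StrictMonoFactorization

end Equiv.Perm

open Equiv.Perm

theorem fullCycleType_eq_parts_partition {β : Type*} [Fintype β] [DecidableEq β] (σ : Perm β) :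
    fullCycleType σ = σ.partition.parts := by
  rw [fullCycleType, parts_partition, add_comm, Nat.card_eq_fintype_card, ← sum_cycleType]
  congr!

theorem mem_strictMonotoneTuples_iff {d r : ℕ} {lam nu : Nat.Partition d}
    {t : Perm (Fin d) × (Fin r → Perm (Fin d)) × Perm (Fin d)} :
    t ∈ strictMonotoneTuples r lam nu ↔
      fullCycleType t.1 = lam.parts ∧ fullCycleType t.2.2 = nu.parts ∧
        IsStrictMonoSwapList (List.ofFn t.2.1) ∧ t.1 * (List.ofFn t.2.1).prod * t.2.2 = 1 := by
  simp only [strictMonotoneTuples, IsStrictMonoSwapList, List.forall_mem_ofFn_iff,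
    List.pairwise_ofFn, Set.mem_ofPred_eq, and_assoc]

theorem Equiv.Perm.IsStrictMonoSwapList.length_add_card_fullCycleType {d : ℕ}
    {l : List (Perm (Fin d))} (hl : IsStrictMonoSwapList l) :
    l.length + (fullCycleType l.prod).card = d := by
  simpa [fullCycleType_eq_parts_partition] using hl.length_add_card_parts_partition

theorem Hlt_eq_Hfree {d : ℕ} (r : ℕ) (lam nu : Nat.Partition d) :
    Hlt r lam nu = Hfree r lam nu := by
  unfold Hlt Hfree
  congr 2
  refine Nat.card_congr (Equiv.ofBijective
    (fun t => ⟨(t.1.1, (List.ofFn t.1.2.1).prod, t.1.2.2), ?_⟩) ⟨?_, ?_⟩)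
  · obtain ⟨hα, hβ, hl, hprod⟩ := mem_strictMonotoneTuples_iff.mp t.2
    have hlen := hl.length_add_card_fullCycleType
    rw [List.length_ofFn] at hlen
    refine ⟨hα, hβ, ?_, ?_, hprod⟩ <;> dsimp only <;> omega
  · rintro ⟨⟨α, f, β⟩, ht⟩ ⟨⟨α', f', β'⟩, ht'⟩ h
    simp only [Subtype.mk.injEq, Prod.mk.injEq] at h ⊢
    obtain ⟨rfl, hf, rfl⟩ := h
    have hl := (mem_strictMonotoneTuples_iff.mp ht).2.2.1
    have hl' := (mem_strictMonotoneTuples_iff.mp ht').2.2.1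
    exact ⟨rfl, List.ofFn_injective (hl.eq_of_prod_eq hl' hf), rfl⟩
  · rintro ⟨⟨α, ψ, β⟩, hα, hβ, hr, -, hprod⟩
    obtain ⟨l, hl, rfl, -⟩ := exists_isStrictMonoSwapList_prod_eq ψ
    have hlen := hl.length_add_card_fullCycleType
    dsimp only at hr
    obtain rfl : l.length = r := by omega
    refine ⟨⟨(α, fun i => l[(i : ℕ)], β), mem_strictMonotoneTuples_iff.mpr ?_⟩, ?_⟩ <;>
      simp only [List.ofFn_getElem]
    exact ⟨hα, hβ, hl, hprod⟩

/-- Every permutation of `[d]` is uniquely a product of transpositions along a strictly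
monotone sequence; consequently `H^<_r(λ,ν) = H^|_r(λ,ν)`. -/
theorem strictly_monotone_factorization_unique_and_Hlt_eq_Hfree (d : ℕ) :
    (∀ σ : Equiv.Perm (Fin d),
      ∃! l : List (Equiv.Perm (Fin d)),
        (∀ τ ∈ l, Equiv.Perm.IsSwap τ) ∧
        l.Pairwise (fun a b => a.support.max < b.support.max) ∧
        l.prod = σ) ∧
    ∀ (r : ℕ) (lam nu : Nat.Partition d), Hlt r lam nu = Hfree r lam nu := by
  refine ⟨fun σ => ?_, Hlt_eq_Hfree⟩
  simpa only [IsStrictMonoSwapList, and_assoc] using existsUnique_isStrictMonoSwapList_prod_eq σ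
end
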